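/- Let f : ℂ → ℂ be an entire function with Taylor coefficients c_n, let C > 0 and ρ > 0, and suppose |c_n| ≤ (e·C·ρ/n)^{n/ρ} for all n ≥ 1. Then limsup_{r→∞} (log M_f(r))/r^ρ ≤ C; in particular, for every ε > 0 there exists r₀ such that M_f(r) ≤ exp((C+ε)·r^ρ) for all r ≥ r₀. -/

import Mathlib

open Filter Real

/-!
Write `a_n = (e C ρ / n)^{n/ρ}`. Since `e y ≤ exp y`, one has `(e A / x)^x ≤ exp A` for all
`x > 0`, and with `x = n / ρ`, `A = C s^ρ` this says `a_n s^n ≤ exp (C s^ρ)` for every radius `s`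
and every `n ≥ 1`. Evaluating this on the larger circle of radius `s = λ r` and summing the
geometric series `∑ λ^{-n}` gives `‖f z‖ ≤ K exp (C λ^ρ r^ρ)` on `‖z‖ = r`; taking `λ > 1` with
`C λ^ρ` arbitrarily close to `C` yields every type bound `C + ε`.
-/

lemma Real.exp_one_mul_div_rpow_self_le_exp {a x : ℝ} (ha : 0 ≤ a) (hx : 0 < x) :
    (exp 1 * a / x) ^ x ≤ exp a :=
  calc (exp 1 * a / x) ^ x = (exp 1 * (a / x)) ^ x := by rw [mul_div_assoc]
    _ ≤ exp (a / x) ^ x := rpow_le_rpow (by positivity) exp_one_mul_le_exp hx.le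
    _ = exp a := by rw [← exp_mul, div_mul_cancel₀ _ hx.ne']

lemma Real.exp_one_mul_mul_div_rpow_mul_rpow_le_exp {C ρ x s : ℝ} (hC : 0 ≤ C) (hρ : 0 < ρ)
    (hx : 0 < x) (hs : 0 ≤ s) :
    (exp 1 * C * ρ / x) ^ (x / ρ) * s ^ x ≤ exp (C * s ^ ρ) := by
  have hsx : s ^ x = (s ^ ρ) ^ (x / ρ) := by rw [← rpow_mul hs, mul_div_cancel₀ _ hρ.ne']
  calc (exp 1 * C * ρ / x) ^ (x / ρ) * s ^ x
      = (exp 1 * (C * s ^ ρ) / (x / ρ)) ^ (x / ρ) := by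
        rw [hsx, ← mul_rpow (by positivity) (by positivity)]
        congr 1
        field_simp
    _ ≤ exp (C * s ^ ρ) := exp_one_mul_div_rpow_self_le_exp (by positivity) (by positivity)

theorem HasSum.norm_le_of_norm_mul_pow_le {𝕜 : Type*} [NormedDivisionRing 𝕜] {c : ℕ → 𝕜}
    {z w : 𝕜} (hw : HasSum (fun n => c n * z ^ n) w) {B s q : ℝ}
    (hB : ∀ n, ‖c n‖ * s ^ n ≤ B) (hq₀ : 0 ≤ q) (hq₁ : q < 1) (hz : ‖z‖ = q * s) :
    ‖w‖ ≤ B * (1 - q)⁻¹ := by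
  refine hw.norm_le_of_bounded ((hasSum_geometric_of_lt_one hq₀ hq₁).mul_left B) fun n => ?_
  calc ‖c n * z ^ n‖ = (‖c n‖ * s ^ n) * q ^ n := by rw [norm_mul, norm_pow, hz, mul_pow]; ring
    _ ≤ B * q ^ n := by gcongr; exact hB n

lemma Real.eventually_mul_exp_mul_rpow_le_exp {K a b ρ : ℝ} (hab : a < b) (hρ : 0 < ρ) :
    ∀ᶠ r in atTop, K * exp (a * r ^ ρ) ≤ exp (b * r ^ ρ) := by
  have hexp : Tendsto (fun r => exp ((b - a) * r ^ ρ)) atTop atTop :=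
    tendsto_exp_atTop.comp ((tendsto_rpow_atTop hρ).const_mul_atTop (sub_pos.2 hab))
  filter_upwards [hexp.eventually_ge_atTop K] with r hr
  calc K * exp (a * r ^ ρ) ≤ exp ((b - a) * r ^ ρ) * exp (a * r ^ ρ) := by gcongr
    _ = exp (b * r ^ ρ) := by rw [← exp_add]; ring_nf

lemma Real.log_le_of_le_exp {x y : ℝ} (hx : 0 ≤ x) (hy : 0 ≤ y) (h : x ≤ exp y) : log x ≤ y := by
  rcases hx.eq_or_lt with rfl | hx
  · simpa using hy
  · exact (log_le_iff_le_exp hx).2 h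

/-- A `limsup` in `ℝ` that is not cobounded (e.g. of a function tending to `-∞`) is `0` by
convention, whence `0 ≤ C`. -/
lemma Real.limsup_le_of_forall_pos_eventually_le_add {α : Type*} {l : Filter α} {u : α → ℝ}
    {C : ℝ} (hC : 0 ≤ C) (h : ∀ ε, 0 < ε → ∀ᶠ x in l, u x ≤ C + ε) : limsup u l ≤ C := by
  rw [limsup_eq]
  by_cases hb : BddBelow {a | ∀ᶠ x in l, u x ≤ a}
  · exact le_of_forall_pos_le_add fun ε hε => csInf_le hb (h ε hε)
  · rw [Real.sInf_of_not_bddBelow hb]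
    exact hC

noncomputable def maxModulus (f : ℂ → ℂ) (r : ℝ) : ℝ := sSup {x : ℝ | ∃ z : ℂ, ‖z‖ = r ∧ x = ‖f z‖}

lemma maxModulus_nonneg (f : ℂ → ℂ) (r : ℝ) : 0 ≤ maxModulus f r :=
  Real.sSup_nonneg fun _ ⟨z, _, hx⟩ => hx ▸ norm_nonneg (f z)

lemma maxModulus_le {f : ℂ → ℂ} {r b : ℝ} (hb : 0 ≤ b) (h : ∀ z : ℂ, ‖z‖ = r → ‖f z‖ ≤ b) :
    maxModulus f r ≤ b :=
  Real.sSup_le (fun _ ⟨z, hz, hx⟩ => hx ▸ h z hz) hb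

section CoefficientDecay

variable {f : ℂ → ℂ} {c : ℕ → ℂ} {C ρ : ℝ}

lemma norm_coeff_mul_pow_le (hC : 0 ≤ C) (hρ : 0 < ρ)
    (hc : ∀ n : ℕ, 1 ≤ n → ‖c n‖ ≤ (exp 1 * C * ρ / (n : ℝ)) ^ ((n : ℝ) / ρ))
    {s : ℝ} (hs : 0 ≤ s) (n : ℕ) :
    ‖c n‖ * s ^ n ≤ (‖c 0‖ + 1) * exp (C * s ^ ρ) := by
  have hexp : 1 ≤ exp (C * s ^ ρ) := one_le_exp (by positivity)
  rcases Nat.eq_zero_or_pos n with rfl | hn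
  · nlinarith [norm_nonneg (c 0)]
  · calc ‖c n‖ * s ^ n ≤ (exp 1 * C * ρ / n) ^ ((n : ℝ) / ρ) * s ^ (n : ℝ) := by
          rw [rpow_natCast]; gcongr; exact hc n hn
      _ ≤ exp (C * s ^ ρ) :=
          exp_one_mul_mul_div_rpow_mul_rpow_le_exp hC hρ (by exact_mod_cast hn) hs
      _ ≤ (‖c 0‖ + 1) * exp (C * s ^ ρ) :=
          le_mul_of_one_le_left (exp_nonneg _) (by linarith [norm_nonneg (c 0)])

theorem exists_norm_le_mul_exp_of_norm_coeff_le (hf : ∀ z : ℂ, HasSum (fun n => c n * z ^ n) (f z))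
    (hC : 0 < C) (hρ : 0 < ρ)
    (hc : ∀ n : ℕ, 1 ≤ n → ‖c n‖ ≤ (exp 1 * C * ρ / (n : ℝ)) ^ ((n : ℝ) / ρ))
    {ε : ℝ} (hε : 0 < ε) : ∃ K, ∀ z, ‖f z‖ ≤ K * exp ((C + ε) * ‖z‖ ^ ρ) := by
  set lam := (1 + ε / C) ^ (1 / ρ)
  have hlam : 1 < lam := one_lt_rpow (by linarith [div_pos hε hC]) (by positivity)
  have hlamρ : C * lam ^ ρ = C + ε := by
    rw [← rpow_mul (by positivity), one_div_mul_cancel hρ.ne', rpow_one]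
    field_simp
  refine ⟨(‖c 0‖ + 1) * (1 - lam⁻¹)⁻¹, fun z => ?_⟩
  have hz : ‖z‖ = lam⁻¹ * (lam * ‖z‖) := by field_simp
  calc ‖f z‖ ≤ (‖c 0‖ + 1) * exp (C * (lam * ‖z‖) ^ ρ) * (1 - lam⁻¹)⁻¹ :=
        (hf z).norm_le_of_norm_mul_pow_le (norm_coeff_mul_pow_le hC.le hρ hc (by positivity))
          (by positivity) (inv_lt_one_of_one_lt₀ hlam) hz
    _ = (‖c 0‖ + 1) * (1 - lam⁻¹)⁻¹ * exp ((C + ε) * ‖z‖ ^ ρ) := by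
        rw [mul_rpow (by positivity) (norm_nonneg z), ← mul_assoc, hlamρ]
        ring

theorem eventually_maxModulus_le_exp (hf : ∀ z : ℂ, HasSum (fun n => c n * z ^ n) (f z))
    (hC : 0 < C) (hρ : 0 < ρ)
    (hc : ∀ n : ℕ, 1 ≤ n → ‖c n‖ ≤ (exp 1 * C * ρ / (n : ℝ)) ^ ((n : ℝ) / ρ))
    {ε : ℝ} (hε : 0 < ε) : ∀ᶠ r in atTop, maxModulus f r ≤ exp ((C + ε) * r ^ ρ) := by
  obtain ⟨K, hK⟩ := exists_norm_le_mul_exp_of_norm_coeff_le hf hC hρ hc (half_pos hε)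
  filter_upwards [eventually_mul_exp_mul_rpow_le_exp (K := K) (by linarith : C + ε / 2 < C + ε) hρ]
    with r hr
  exact maxModulus_le (exp_pos _).le fun z hz => (hK z).trans (hz ▸ hr)

end CoefficientDecay

/-- Example 3.2, converse direction: if `f` is entire, `C, ρ > 0`, and
`|c_n| ≤ (e·C·ρ/n)^{n/ρ}` for all `n ≥ 1`, then
`limsup_{r→∞} (log M_f(r))/r^ρ ≤ C`; in particular for every `ε > 0` there is `r₀`
with `M_f(r) ≤ exp((C+ε)·r^ρ)` for all `r ≥ r₀`. -/
theorem type_recovery_from_coefficient_decay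
    (f : ℂ → ℂ) (c : ℕ → ℂ)
    (hf : ∀ z : ℂ, HasSum (fun n : ℕ => c n * z ^ n) (f z))
    (C ρ : ℝ) (hC : 0 < C) (hρ : 0 < ρ)
    (hc : ∀ n : ℕ, 1 ≤ n →
      ‖c n‖ ≤ (Real.exp 1 * C * ρ / (n : ℝ)) ^ ((n : ℝ) / ρ)) :
    Filter.limsup
        (fun r : ℝ =>
          Real.log (sSup {x : ℝ | ∃ z : ℂ, ‖z‖ = r ∧ x = ‖f z‖}) /
            r ^ ρ)
        Filter.atTop ≤ C ∧
    ∀ ε : ℝ, 0 < ε → ∃ r₀ : ℝ, ∀ r : ℝ, r₀ ≤ r →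
      sSup {x : ℝ | ∃ z : ℂ, ‖z‖ = r ∧ x = ‖f z‖}
        ≤ Real.exp ((C + ε) * r ^ ρ) := by
  have hM := fun ε (hε : 0 < ε) => eventually_maxModulus_le_exp hf hC hρ hc hε
  refine ⟨limsup_le_of_forall_pos_eventually_le_add hC.le fun ε hε => ?_,
    fun ε hε => eventually_atTop.1 (hM ε hε)⟩
  filter_upwards [hM ε hε, eventually_gt_atTop 0] with r hMr hr
  rw [div_le_iff₀ (rpow_pos_of_pos hr ρ)]
  exact log_le_of_le_exp (maxModulus_nonneg f r) (by positivity) hMr
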